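/- Let n ≥ 3 be an integer and let w(t) = Σ_{ℓ≥1} c_ℓ t^ℓ be a formal power series over K with zero constant term such that v(c₂) ≥ n and v(c_ℓ) > n + (1/2)·S(ℓ) − 1/2 for every ℓ ≥ 1 with ℓ ≠ 2. Then for every integer j ≥ 2 and every ℓ ≥ 1, the coefficient of t^ℓ in w(t)^j has valuation strictly greater than j·n + (1/2)·S(ℓ) − j/2. -/

import Mathlib

/-- `S ℓ` is the sum of the digits of `ℓ` in base 2. -/
def S (ℓ : ℕ) : ℕ := (Nat.digits 2 ℓ).sum

/-!
With `B j m = j n + S(m)/2 - j/2` (`coeffBound n j m`), the bounds are additive up to the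
subadditivity of the binary digit sum, `B (i + j) (a + b) ≤ B i a + B j b`, so each term
`c_a c_b` of a coefficient of a product of power series obeys the bound for the product. For `w`
the bound is strict except at `t²`; in `w²` the one term that could attain it, `c₂ c₂` at `t⁴`,
gains `1/2` because `S 4 = 1 < S 2 + S 2`. From `j = 2` on the bound is strict everywhere, and
multiplying by `w` keeps it strict.
-/

open PowerSeries
open scoped Nat

/-- Legendre: `(p - 1) vₚ(n!) = n - sₚ(n)`, and `a! b! ∣ (a + b)!`. -/
theorem Nat.digits_sum_add_le (p : ℕ) [Fact p.Prime] (a b : ℕ) :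
    (p.digits (a + b)).sum ≤ (p.digits a).sum + (p.digits b).sum := by
  have hfact : padicValNat p (a ! * b !) ≤ padicValNat p (a + b)! := by
    rw [← padicValNat_dvd_iff_le (Nat.factorial_ne_zero _)]
    exact pow_padicValNat_dvd.trans (Nat.factorial_mul_factorial_dvd_factorial_add a b)
  rw [padicValNat.mul (Nat.factorial_ne_zero _) (Nat.factorial_ne_zero _)] at hfact
  have hmul := Nat.mul_le_mul_left (p - 1) hfact
  rw [Nat.mul_add, sub_one_mul_padicValNat_factorial, sub_one_mul_padicValNat_factorial,
    sub_one_mul_padicValNat_factorial] at hmul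
  have := Nat.digit_sum_le p a
  have := Nat.digit_sum_le p b
  have := Nat.digit_sum_le p (a + b)
  omega

theorem S_add_le (a b : ℕ) : S (a + b) ≤ S a + S b :=
  haveI : Fact (Nat.Prime 2) := ⟨Nat.prime_two⟩
  Nat.digits_sum_add_le 2 a b

theorem map_one_eq_zero_of_map_mul {M : Type*} [MulOneClass M] (v : M → WithTop ℚ)
    (h1 : v 1 ≠ ⊤) (hvmul : ∀ x y, v (x * y) = v x + v y) : v 1 = 0 := by
  obtain ⟨q, hq⟩ := WithTop.ne_top_iff_exists.mp h1
  have h := hvmul 1 1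
  rw [mul_one, ← hq, ← WithTop.coe_add, WithTop.coe_inj] at h
  rw [← hq, WithTop.coe_eq_zero]
  linarith

namespace AddValuation

variable {R : Type*} [CommRing R] (v : AddValuation R (WithTop ℚ))

theorem lt_map_coeff_mul {f g : R⟦X⟧} {q : ℚ} {m : ℕ}
    (h : ∀ a b, a + b = m → (q : WithTop ℚ) < v (coeff a f) + v (coeff b g)) :
    (q : WithTop ℚ) < v (coeff m (f * g)) := by
  rw [coeff_mul]
  refine v.map_lt_sum WithTop.coe_ne_top fun p hp => ?_
  rw [v.map_mul]
  exact h p.1 p.2 (Finset.HasAntidiagonal.mem_antidiagonal.mp hp)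

theorem lt_map_coeff_mul_of_lt_of_le {f g : R⟦X⟧} {A B C : ℕ → ℚ}
    (hABC : ∀ a b, C (a + b) ≤ A a + B b) (hf : ∀ a, (A a : WithTop ℚ) < v (coeff a f))
    (hg : ∀ b, (B b : WithTop ℚ) ≤ v (coeff b g)) (m : ℕ) :
    (C m : WithTop ℚ) < v (coeff m (f * g)) :=
  v.lt_map_coeff_mul fun a b hab => calc
    (C m : WithTop ℚ) ≤ A a + B b := by exact_mod_cast hab ▸ hABC a b
    _ < v (coeff a f) + v (coeff b g) :=
      WithTop.add_lt_add_of_lt_of_le WithTop.coe_ne_top (hf a) (hg b)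

end AddValuation

def coeffBound (n : ℚ) (j m : ℕ) : ℚ := j * n + S m / 2 - j / 2

theorem coeffBound_add_le (n : ℚ) (i j a b : ℕ) :
    coeffBound n (i + j) (a + b) ≤ coeffBound n i a + coeffBound n j b := by
  have : (S (a + b) : ℚ) ≤ S a + S b := by exact_mod_cast S_add_le a b
  simp only [coeffBound]
  push_cast
  linarith

section

variable {K : Type*} [CommRing K] (v : AddValuation K (WithTop ℚ)) {n : ℚ} {w : K⟦X⟧}
  (hw2 : (n : WithTop ℚ) ≤ v (coeff 2 w))
  (hw : ∀ ℓ, ℓ ≠ 2 → (coeffBound n 1 ℓ : WithTop ℚ) < v (coeff ℓ w))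
include hw2 hw

theorem coeffBound_one_le (ℓ : ℕ) : (coeffBound n 1 ℓ : WithTop ℚ) ≤ v (coeff ℓ w) := by
  rcases eq_or_ne ℓ 2 with rfl | hℓ
  · convert hw2
    simp [coeffBound, S]
  · exact (hw ℓ hℓ).le

theorem coeffBound_two_lt (m : ℕ) : (coeffBound n 2 m : WithTop ℚ) < v (coeff m (w ^ 2)) := by
  rw [sq]
  refine v.lt_map_coeff_mul fun a b hab => ?_
  have hsplit : (coeffBound n 2 m : WithTop ℚ) ≤ coeffBound n 1 a + coeffBound n 1 b := by
    exact_mod_cast hab ▸ coeffBound_add_le n 1 1 a b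
  rcases eq_or_ne a 2 with rfl | ha
  · rcases eq_or_ne b 2 with rfl | hb
    · calc (coeffBound n 2 m : WithTop ℚ) < n + n := by
            rw [← hab]; norm_cast; norm_num [coeffBound, S]; linarith
        _ ≤ _ := add_le_add hw2 hw2
    · exact hsplit.trans_lt <| WithTop.add_lt_add_of_le_of_lt WithTop.coe_ne_top
        (coeffBound_one_le v hw2 hw 2) (hw b hb)
  · exact hsplit.trans_lt <| WithTop.add_lt_add_of_lt_of_le WithTop.coe_ne_top
      (hw a ha) (coeffBound_one_le v hw2 hw b)

theorem coeffBound_lt_pow {j : ℕ} (hj : 2 ≤ j) (m : ℕ) :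
    (coeffBound n j m : WithTop ℚ) < v (coeff m (w ^ j)) := by
  induction j, hj using Nat.le_induction generalizing m with
  | base => exact coeffBound_two_lt v hw2 hw m
  | succ j _ ih =>
    rw [pow_succ]
    exact v.lt_map_coeff_mul_of_lt_of_le (coeffBound_add_le n j 1) ih
      (coeffBound_one_le v hw2 hw) m

end

theorem stmt_19_general (K : Type*) [Field K] (v : K → WithTop ℚ)
    (hv0 : ∀ x : K, v x = ⊤ ↔ x = 0)
    (hvmul : ∀ x y : K, v (x * y) = v x + v y)
    (hvadd : ∀ x y : K, min (v x) (v y) ≤ v (x + y))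
    (n : ℕ)
    (w : PowerSeries K)
    (h0 : PowerSeries.coeff 0 w = 0)
    (h2 : (((n : ℚ)) : WithTop ℚ) ≤ v (PowerSeries.coeff 2 w))
    (hgen : ∀ ℓ : ℕ, 1 ≤ ℓ → ℓ ≠ 2 →
      (((n : ℚ) + (S ℓ : ℚ) / 2 - 1 / 2 : ℚ) : WithTop ℚ) < v (PowerSeries.coeff ℓ w))
    (j : ℕ) (hj : 2 ≤ j) (ℓ : ℕ) :
    (((j : ℚ) * (n : ℚ) + (S ℓ : ℚ) / 2 - (j : ℚ) / 2 : ℚ) : WithTop ℚ) <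
      v (PowerSeries.coeff ℓ (w ^ j)) := by
  let v' : AddValuation K (WithTop ℚ) :=
    .of v ((hv0 0).mpr rfl) (map_one_eq_zero_of_map_mul v ((hv0 1).not.mpr one_ne_zero) hvmul) hvadd hvmul
  refine coeffBound_lt_pow v' h2 (fun m hm2 => ?_) hj ℓ
  rcases Nat.eq_zero_or_pos m with rfl | hm
  · simp [v', h0]
  · simpa [coeffBound, v'] using hgen m hm hm2

theorem stmt_19 (K : Type*) [Field K] [CharZero K] (v : K → WithTop ℚ)
    (hv0 : ∀ x : K, v x = ⊤ ↔ x = 0)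
    (hvmul : ∀ x y : K, v (x * y) = v x + v y)
    (hvadd : ∀ x y : K, min (v x) (v y) ≤ v (x + y))
    (hv2 : v 2 = 1)
    (n : ℕ) (hn : 3 ≤ n)
    (w : PowerSeries K)
    (h0 : PowerSeries.coeff 0 w = 0)
    (h2 : (((n : ℚ)) : WithTop ℚ) ≤ v (PowerSeries.coeff 2 w))
    (hgen : ∀ ℓ : ℕ, 1 ≤ ℓ → ℓ ≠ 2 →
      (((n : ℚ) + (S ℓ : ℚ) / 2 - 1 / 2 : ℚ) : WithTop ℚ) < v (PowerSeries.coeff ℓ w))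
    (j : ℕ) (hj : 2 ≤ j) (ℓ : ℕ) (hℓ : 1 ≤ ℓ) :
    (((j : ℚ) * (n : ℚ) + (S ℓ : ℚ) / 2 - (j : ℚ) / 2 : ℚ) : WithTop ℚ) <
      v (PowerSeries.coeff ℓ (w ^ j)) :=
  stmt_19_general K v hv0 hvmul hvadd n w h0 h2 hgen j hj ℓ
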